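/- With the same setup (polynomial Euler product F, α(n), C(F), E₂, f₁, ∑α(n)/n convergent), define g₁(x,F) = ∑_{n=1}^∞ α(n){x/n}({x/n} - 1). Then for all x ≥ 1, E₂(x,F) = x·f₁(x,F) + (1/2)g₁(x,F). -/

import Mathlib

open Filter Topology Classical Finset

/-- `γ(p) = p(1 - 1/F_p(1))` where `F_p(1)⁻¹ = ∏_j (1 - α_j(p)/p)` is the inverse of the
local Euler factor at `p` evaluated at `s = 1`. -/
noncomputable def gammaF {d : ℕ} (a : ℕ → Fin d → ℂ) (p : ℕ) : ℂ :=
  (p : ℂ) * (1 - ∏ j : Fin d, (1 - a p j / (p : ℂ)))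

/-- `α(n) = μ(n) ∏_{p|n} γ(p)`. -/
noncomputable def alphaF {d : ℕ} (a : ℕ → Fin d → ℂ) (n : ℕ) : ℂ :=
  ((ArithmeticFunction.moebius n : ℤ) : ℂ) * ∏ p ∈ n.primeFactors, gammaF a p

/-- The associated Euler totient function `φ(n,F) = n ∏_{p|n} F_p(1)⁻¹`. -/
noncomputable def phiF {d : ℕ} (a : ℕ → Fin d → ℂ) (n : ℕ) : ℂ :=
  (n : ℂ) * ∏ p ∈ n.primeFactors, ∏ j : Fin d, (1 - a p j / (p : ℂ))

/-- The saw-tooth function: `s(x) = 0` for integer `x`, `1/2 - {x}` otherwise. -/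
noncomputable def saw (x : ℝ) : ℝ := if ∃ k : ℤ, x = (k : ℝ) then 0 else 1/2 - Int.fract x


section Aux
variable {d : ℕ} (a : ℕ → Fin d → ℂ)

lemma alphaF_zero : alphaF a 0 = 0 := by simp [alphaF]

lemma alphaF_one : alphaF a 1 = 1 := by simp [alphaF]

lemma alphaF_not_squarefree {n : ℕ} (h : ¬ Squarefree n) : alphaF a n = 0 := by
  simp [alphaF, ArithmeticFunction.moebius_eq_zero_of_not_squarefree h]

lemma alphaF_prime {p : ℕ} (hp : p.Prime) : alphaF a p = - gammaF a p := by
  simp [alphaF, ArithmeticFunction.moebius_apply_prime hp, hp.primeFactors]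

lemma alphaF_mul {m n : ℕ} (h : m.Coprime n) :
    alphaF a (m * n) = alphaF a m * alphaF a n := by
  rcases eq_or_ne m 0 with rfl | hm
  · simp [alphaF]
  rcases eq_or_ne n 0 with rfl | hn
  · simp [alphaF]
  rw [alphaF, alphaF, alphaF, ArithmeticFunction.isMultiplicative_moebius.2 h,
    Nat.primeFactors_mul hm hn, Finset.prod_union (h.disjoint_primeFactors)]
  push_cast
  ring

lemma norm_one_sub_prod {ι : Type*} (s : Finset ι) (z : ι → ℂ) (ε : ℝ) (hε : 0 ≤ ε)
    (hz : ∀ j ∈ s, ‖z j‖ ≤ ε) :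
    ‖1 - ∏ j ∈ s, (1 - z j)‖ ≤ s.card * ε * (1 + ε) ^ s.card := by
  induction s using Finset.cons_induction with
  | empty => simp
  | cons i s his ih =>
    have hprod : ‖∏ j ∈ s, (1 - z j)‖ ≤ (1 + ε) ^ s.card := by
      refine le_trans (norm_prod_le _ _) ?_
      rw [← Finset.prod_const]
      refine Finset.prod_le_prod (fun j _ => norm_nonneg _) (fun j hj => ?_)
      calc ‖1 - z j‖ ≤ ‖(1:ℂ)‖ + ‖z j‖ := norm_sub_le _ _
        _ ≤ 1 + ε := by simpa using hz j (Finset.mem_cons_of_mem hj)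
    have hzi : ‖z i‖ ≤ ε := hz i (Finset.mem_cons_self i s)
    have ih' := ih (fun j hj => hz j (Finset.mem_cons_of_mem hj))
    rw [Finset.prod_cons, Finset.card_cons]
    have key : (1:ℂ) - (1 - z i) * ∏ j ∈ s, (1 - z j) =
        (1 - ∏ j ∈ s, (1 - z j)) + z i * ∏ j ∈ s, (1 - z j) := by ring
    rw [key]
    have h1 : ‖(1 - ∏ j ∈ s, (1 - z j)) + z i * ∏ j ∈ s, (1 - z j)‖ ≤
        s.card * ε * (1 + ε) ^ s.card + ε * (1 + ε) ^ s.card := by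
      refine le_trans (norm_add_le _ _) (add_le_add ih' ?_)
      rw [norm_mul]
      exact mul_le_mul hzi hprod (norm_nonneg _) hε
    refine h1.trans ?_
    have h2 : (0:ℝ) ≤ (1 + ε) ^ s.card := pow_nonneg (by linarith) _
    have h3 : ((1:ℝ) + ε) ^ s.card ≤ (1 + ε) ^ (s.card + 1) := by
      refine pow_le_pow_right₀ (by linarith) (Nat.le_succ _)
    push_cast
    nlinarith [mul_le_mul_of_nonneg_left h3 (mul_nonneg (Nat.cast_nonneg s.card) hε),
      mul_le_mul_of_nonneg_left h3 hε]

lemma norm_gammaF_le (ha : ∀ p : ℕ, p.Prime → ∀ j : Fin d, ‖a p j‖ ≤ 1)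
    {p : ℕ} (hp : p.Prime) : ‖gammaF a p‖ ≤ d * 2 ^ d := by
  have hp2 : (2:ℝ) ≤ p := by exact_mod_cast hp.two_le
  have hp0 : (0:ℝ) < p := by linarith
  have hz : ∀ j ∈ Finset.univ (α := Fin d), ‖a p j / (p:ℂ)‖ ≤ 1 / p := by
    intro j _
    rw [norm_div, Complex.norm_natCast]
    exact div_le_div_of_nonneg_right (ha p hp j) hp0.le
  have h := norm_one_sub_prod Finset.univ (fun j => a p j / (p:ℂ)) (1/p)
    (by positivity) hz
  simp only [Finset.card_univ, Fintype.card_fin] at h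
  rw [gammaF, norm_mul, Complex.norm_natCast]
  have h1p : (1:ℝ) + 1/p ≤ 2 := by
    have : (1:ℝ)/p ≤ 1 := by
      rw [div_le_one hp0]; linarith
    linarith
  calc (p:ℝ) * ‖1 - ∏ j : Fin d, (1 - a p j / (p:ℂ))‖
      ≤ p * (d * (1/p) * (1 + 1/p) ^ d) := by
        exact mul_le_mul_of_nonneg_left h hp0.le
    _ = d * (1 + 1/p) ^ d := by field_simp
    _ ≤ d * 2 ^ d := by
        refine mul_le_mul_of_nonneg_left ?_ (Nat.cast_nonneg d)
        exact pow_le_pow_left₀ (by positivity) h1p d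

lemma norm_alphaF_le (ha : ∀ p : ℕ, p.Prime → ∀ j : Fin d, ‖a p j‖ ≤ 1) (n : ℕ) :
    ‖alphaF a n‖ ≤ ∏ p ∈ n.primeFactors, ((d : ℝ) * 2 ^ d) := by
  rw [alphaF, norm_mul]
  have hμ : ‖((ArithmeticFunction.moebius n : ℤ) : ℂ)‖ ≤ 1 := by
    rw [Complex.norm_intCast]
    exact_mod_cast ArithmeticFunction.abs_moebius_le_one
  calc ‖((ArithmeticFunction.moebius n : ℤ) : ℂ)‖ * ‖∏ p ∈ n.primeFactors, gammaF a p‖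
      ≤ 1 * ‖∏ p ∈ n.primeFactors, gammaF a p‖ :=
        mul_le_mul_of_nonneg_right hμ (norm_nonneg _)
    _ = ‖∏ p ∈ n.primeFactors, gammaF a p‖ := one_mul _
    _ ≤ ∏ p ∈ n.primeFactors, ‖gammaF a p‖ := norm_prod_le _ _
    _ ≤ ∏ p ∈ n.primeFactors, ((d : ℝ) * 2 ^ d) := by
        refine Finset.prod_le_prod (fun p _ => norm_nonneg _) (fun p hp => ?_)
        exact norm_gammaF_le a ha (Nat.prime_of_mem_primeFactors hp)

lemma summable_norm_alphaF (ha : ∀ p : ℕ, p.Prime → ∀ j : Fin d, ‖a p j‖ ≤ 1) :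
    Summable (fun n : ℕ => ‖alphaF a n / (n:ℂ)^2‖) := by
  classical
  set B : ℝ := d * 2 ^ d with hBdef
  have hB : 0 ≤ B := by positivity
  have hsq : Summable (fun m : ℕ => 1/(m:ℝ)^2) := Real.summable_one_div_nat_pow.mpr one_lt_two
  set T : ℝ := ∑' m : ℕ, 1/(m:ℝ)^2 with hTdef
  have hw : ∀ n : ℕ, Squarefree n → ‖alphaF a n / (n:ℂ)^2‖ ≤
      ∏ p ∈ n.primeFactors, (B / (p:ℝ)^2) := by
    intro n hn
    have hn0 : n ≠ 0 := hn.ne_zero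
    have hprod : (∏ p ∈ n.primeFactors, (p:ℝ)) = n := by
      rw [← Nat.cast_prod, Nat.prod_primeFactors_of_squarefree hn]
    rw [norm_div, norm_pow, Complex.norm_natCast, Finset.prod_div_distrib]
    have hpos : (0:ℝ) < ∏ p ∈ n.primeFactors, (p:ℝ)^2 := by
      refine Finset.prod_pos (fun p hp => ?_)
      have := (Nat.prime_of_mem_primeFactors hp).pos
      positivity
    have hden : (n:ℝ)^2 = ∏ p ∈ n.primeFactors, (p:ℝ)^2 := by
      rw [← hprod, ← Finset.prod_pow]
    rw [hden]
    exact div_le_div_of_nonneg_right (norm_alphaF_le a ha n) hpos.le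
  refine summable_of_sum_range_le (c := Real.exp (B * T)) (fun n => norm_nonneg _) ?_
  intro N
  have h1 : ∑ i ∈ Finset.range N, ‖alphaF a i / (i:ℂ)^2‖ =
      ∑ i ∈ (Finset.range N).filter Squarefree, ‖alphaF a i / (i:ℂ)^2‖ := by
    refine (Finset.sum_filter_of_ne (fun i _ hi => ?_)).symm
    by_contra h
    exact hi (by rw [alphaF_not_squarefree a h, zero_div, norm_zero])
  have h2 : ∑ i ∈ (Finset.range N).filter Squarefree, ‖alphaF a i / (i:ℂ)^2‖ ≤
      ∑ i ∈ (Finset.range N).filter Squarefree, ∏ p ∈ i.primeFactors, (B / (p:ℝ)^2) :=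
    Finset.sum_le_sum (fun i hi => hw i (Finset.mem_filter.mp hi).2)
  have h3 : ∑ i ∈ (Finset.range N).filter Squarefree, ∏ p ∈ i.primeFactors, (B / (p:ℝ)^2) =
      ∑ S ∈ ((Finset.range N).filter Squarefree).image Nat.primeFactors,
        ∏ p ∈ S, (B / (p:ℝ)^2) := by
    refine (Finset.sum_image (s := (Finset.range N).filter Squarefree)
      (g := Nat.primeFactors) (f := fun S : Finset ℕ => ∏ p ∈ S, (B / (p:ℝ)^2))
      (fun x hx y hy hxy => ?_)).symm
    have hx' := (Finset.mem_filter.mp hx).2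
    have hy' := (Finset.mem_filter.mp hy).2
    rw [← Nat.prod_primeFactors_of_squarefree hx', ← Nat.prod_primeFactors_of_squarefree hy', hxy]
  have h4 : ∑ S ∈ ((Finset.range N).filter Squarefree).image Nat.primeFactors,
        ∏ p ∈ S, (B / (p:ℝ)^2) ≤
      ∑ S ∈ (N.primesBelow).powerset, ∏ p ∈ S, (B / (p:ℝ)^2) := by
    refine Finset.sum_le_sum_of_subset_of_nonneg ?_ (fun S _ _ => Finset.prod_nonneg
      (fun p _ => by positivity))
    intro S hS
    rw [Finset.mem_image] at hS
    obtain ⟨n, hn, rfl⟩ := hS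
    rw [Finset.mem_powerset]
    intro p hp
    rw [Finset.mem_filter, Finset.mem_range] at hn
    have hpn : p ≤ n := Nat.le_of_dvd (Nat.pos_of_ne_zero hn.2.ne_zero)
      (Nat.dvd_of_mem_primeFactors hp)
    exact Nat.mem_primesBelow.mpr ⟨lt_of_le_of_lt hpn hn.1,
      Nat.prime_of_mem_primeFactors hp⟩
  have h5 : ∑ S ∈ (N.primesBelow).powerset, ∏ p ∈ S, (B / (p:ℝ)^2) =
      ∏ p ∈ N.primesBelow, (B / (p:ℝ)^2 + 1) := by
    rw [Finset.prod_add]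
    exact Finset.sum_congr rfl (fun S _ => by simp
      )
  have h6 : ∏ p ∈ N.primesBelow, (B / (p:ℝ)^2 + 1) ≤
      Real.exp (∑ p ∈ N.primesBelow, B / (p:ℝ)^2) := by
    rw [Real.exp_sum]
    refine Finset.prod_le_prod (fun p _ => by positivity) (fun p _ => Real.add_one_le_exp _)
  have h7 : ∑ p ∈ N.primesBelow, B / (p:ℝ)^2 ≤ B * T := by
    have : ∑ p ∈ N.primesBelow, B / (p:ℝ)^2 = B * ∑ p ∈ N.primesBelow, 1/(p:ℝ)^2 := by
      rw [Finset.mul_sum]; exact Finset.sum_congr rfl (fun p _ => by ring)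
    rw [this]
    refine mul_le_mul_of_nonneg_left ?_ hB
    exact hsq.sum_le_tsum _ (fun i _ => by positivity)
  calc ∑ i ∈ Finset.range N, ‖alphaF a i / (i:ℂ)^2‖
      ≤ ∑ S ∈ (N.primesBelow).powerset, ∏ p ∈ S, (B / (p:ℝ)^2) := by
        rw [h1]; exact h2.trans (h3.le.trans h4)
    _ ≤ Real.exp (∑ p ∈ N.primesBelow, B / (p:ℝ)^2) := h5.le.trans h6
    _ ≤ Real.exp (B * T) := Real.exp_le_exp.mpr h7

lemma hasSum_alphaF (ha : ∀ p : ℕ, p.Prime → ∀ j : Fin d, ‖a p j‖ ≤ 1) :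
    HasSum (fun n : ℕ => alphaF a n / (n:ℂ)^2)
      (∏' p : Nat.Primes, (1 - gammaF a (p:ℕ) / ((p:ℕ):ℂ)^2)) := by
  have hsum := summable_norm_alphaF a ha
  have hS : Summable (fun n : ℕ => alphaF a n / (n:ℂ)^2) := hsum.of_norm
  have hf1 : alphaF a 1 / ((1:ℕ):ℂ)^2 = 1 := by simp [alphaF_one]
  have hmul : ∀ {m n : ℕ}, m.Coprime n →
      alphaF a (m*n) / ((m*n:ℕ):ℂ)^2 =
        (alphaF a m / (m:ℂ)^2) * (alphaF a n / (n:ℂ)^2) := by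
    intro m n h
    rw [alphaF_mul a h]
    push_cast
    rw [div_mul_div_comm, mul_pow]
  have hf0 : alphaF a 0 / ((0:ℕ):ℂ)^2 = 0 := by simp [alphaF_zero]
  have hEP := EulerProduct.eulerProduct_tprod (f := fun n : ℕ => alphaF a n / (n:ℂ)^2)
    hf1 hmul hsum hf0
  have hfac : ∀ p : Nat.Primes, (∑' e : ℕ, alphaF a ((p:ℕ)^e) / (((p:ℕ)^e : ℕ):ℂ)^2) =
      1 - gammaF a (p:ℕ) / ((p:ℕ):ℂ)^2 := by
    intro p
    have hp := p.prop
    rw [tsum_eq_sum (s := {0, 1}) ?h]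
    · rw [Finset.sum_insert (by simp), Finset.sum_singleton]
      simp only [pow_zero, pow_one]
      rw [hf1, alphaF_prime a hp]
      ring
    · intro e he
      simp only [Finset.mem_insert, Finset.mem_singleton] at he
      push_neg at he
      have : ¬ Squarefree ((p:ℕ)^e) := by
        rw [Nat.squarefree_pow_iff hp.ne_one he.1]
        exact fun h => he.2 h.2
      rw [alphaF_not_squarefree a this, zero_div]
  have := hS.hasSum
  rwa [← hEP, tprod_congr hfac] at this

lemma sum_Icc_cast (q : ℕ) : (∑ k ∈ Finset.Icc 1 q, (k:ℂ)) = (q:ℂ) * ((q:ℂ) + 1) / 2 := by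
  induction q with
  | zero => simp
  | succ q ih =>
    rw [Finset.sum_Icc_succ_top (Nat.one_le_iff_ne_zero.mpr (Nat.succ_ne_zero q)), ih]
    push_cast
    ring

/-- Dirichlet hyperbola swap. -/
lemma swap_sum (K : ℕ) :
    ∑ n ∈ Finset.Icc 1 K, (n : ℂ) * ∑ m ∈ n.divisors, alphaF a m / (m : ℂ) =
    ∑ m ∈ Finset.Icc 1 K, alphaF a m * (((K / m : ℕ) : ℂ) * (((K / m : ℕ) : ℂ) + 1) / 2) := by
  have lhs_eq : ∑ x ∈ (Finset.Icc 1 K).sigma (fun n => n.divisors),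
        ((x.1 : ℂ) * (alphaF a x.2 / (x.2 : ℂ))) =
      ∑ n ∈ Finset.Icc 1 K, (n : ℂ) * ∑ m ∈ n.divisors, alphaF a m / (m : ℂ) := by
    rw [Finset.sum_sigma]
    exact Finset.sum_congr rfl (fun n _ => by rw [Finset.mul_sum])
  have rhs_eq : ∑ x ∈ (Finset.Icc 1 K).sigma (fun m => Finset.Icc 1 (K / m)),
        (alphaF a x.1 * (x.2 : ℂ)) =
      ∑ m ∈ Finset.Icc 1 K,
        alphaF a m * (((K / m : ℕ) : ℂ) * (((K / m : ℕ) : ℂ) + 1) / 2) := by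
    rw [Finset.sum_sigma]
    refine Finset.sum_congr rfl (fun m _ => ?_)
    dsimp only
    rw [← Finset.mul_sum, sum_Icc_cast]
  rw [← lhs_eq, ← rhs_eq]
  refine Finset.sum_nbij' (fun x => ⟨x.2, x.1 / x.2⟩) (fun y => ⟨y.1 * y.2, y.1⟩)
    ?_ ?_ ?_ ?_ ?_
  · rintro ⟨n, m⟩ hx
    rw [Finset.mem_sigma, Finset.mem_Icc, Nat.mem_divisors] at hx
    dsimp only at hx ⊢
    obtain ⟨⟨h1n, hnK⟩, hmn, hn0⟩ := hx
    have hm1 : 1 ≤ m := Nat.pos_of_dvd_of_pos hmn (Nat.pos_of_ne_zero hn0)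
    have hmn' : m ≤ n := Nat.le_of_dvd (Nat.pos_of_ne_zero hn0) hmn
    rw [Finset.mem_sigma, Finset.mem_Icc, Finset.mem_Icc]
    exact ⟨⟨hm1, hmn'.trans hnK⟩,
      (Nat.one_le_div_iff (by omega)).mpr hmn', Nat.div_le_div_right hnK⟩
  · rintro ⟨m, k⟩ hy
    rw [Finset.mem_sigma, Finset.mem_Icc, Finset.mem_Icc] at hy
    dsimp only at hy ⊢
    obtain ⟨⟨h1m, hmK⟩, h1k, hkK⟩ := hy
    have hmk : m * k ≤ K := by
      calc m * k ≤ m * (K / m) := Nat.mul_le_mul_left m hkK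
        _ ≤ K := Nat.mul_div_le K m
    rw [Finset.mem_sigma, Finset.mem_Icc, Nat.mem_divisors]
    have hm0 : 1 ≤ m * k := Nat.one_le_iff_ne_zero.mpr (Nat.mul_ne_zero (by omega) (by omega))
    exact ⟨⟨hm0, hmk⟩, Dvd.intro k rfl, Nat.one_le_iff_ne_zero.mp hm0⟩
  · rintro ⟨n, m⟩ hx
    rw [Finset.mem_sigma, Finset.mem_Icc, Nat.mem_divisors] at hx
    dsimp only at hx ⊢
    exact congrArg (fun t => (⟨t, m⟩ : Σ _ : ℕ, ℕ)) (Nat.mul_div_cancel' hx.2.1)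
  · rintro ⟨m, k⟩ hy
    rw [Finset.mem_sigma, Finset.mem_Icc, Finset.mem_Icc] at hy
    dsimp only at hy ⊢
    exact congrArg (Sigma.mk m) (Nat.mul_div_cancel_left k (by omega))
  · rintro ⟨n, m⟩ hx
    rw [Finset.mem_sigma, Finset.mem_Icc, Nat.mem_divisors] at hx
    dsimp only at hx ⊢
    obtain ⟨⟨h1n, hnK⟩, hmn, hn0⟩ := hx
    have hm0 : m ≠ 0 := fun h => hn0 (Nat.eq_zero_of_zero_dvd (h ▸ hmn))
    have hcast : (n : ℂ) = (m : ℂ) * ((n / m : ℕ) : ℂ) := by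
      rw [← Nat.cast_mul, Nat.mul_div_cancel' hmn]
    rw [hcast]
    have hmC : (m : ℂ) ≠ 0 := Nat.cast_ne_zero.mpr hm0
    field_simp

/-- Pointwise key identity. -/
lemma key_identity (x : ℝ) (hx : 1 ≤ x) (n : ℕ) (hn : 1 ≤ n) :
    alphaF a n * ((⌊x / (n:ℝ)⌋₊ : ℂ) * ((⌊x / (n:ℝ)⌋₊ : ℂ) + 1) / 2) =
      (x : ℂ) * ((alphaF a n / (n : ℂ)) * ((saw (x / (n:ℝ)) : ℝ) : ℂ))
      + (1/2 : ℂ) * (alphaF a n * ((Int.fract (x / (n:ℝ)) : ℝ) : ℂ) *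
          (((Int.fract (x / (n:ℝ)) : ℝ) : ℂ) - 1))
      + ((x : ℂ)^2 / 2) * (alphaF a n / (n : ℂ)^2)
      + (1/2 : ℂ) * (if ∃ k : ℤ, x / (n:ℝ) = (k : ℝ) then
          alphaF a n * (((x / (n:ℝ) : ℝ)) : ℂ) else 0) := by
  set y := x / (n:ℝ) with hy
  have hn0 : (0:ℝ) < n := by exact_mod_cast hn
  have hy0 : 0 ≤ y := by positivity
  have hnC : (n:ℂ) ≠ 0 := Nat.cast_ne_zero.mpr (by omega)
  have hyC : ((y:ℝ):ℂ) = (x:ℂ) / (n:ℂ) := by rw [hy]; push_cast; ring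
  by_cases h : ∃ k : ℤ, y = (k : ℝ)
  · obtain ⟨k, hk⟩ := h
    have hfr : Int.fract y = 0 := by rw [hk, Int.fract_intCast]
    have hsaw : saw y = 0 := by rw [saw, if_pos ⟨k, hk⟩]
    have hfl : (⌊y⌋₊ : ℝ) = y := by
      rw [natCast_floor_eq_intCast_floor hy0, hk, Int.floor_intCast]
    have hflC : ((⌊y⌋₊ : ℕ) : ℂ) = (x:ℂ) / (n:ℂ) := by
      have h2 := congrArg Complex.ofReal hfl
      push_cast at h2
      rw [h2, hyC]
    rw [if_pos ⟨k, hk⟩, hsaw, hfr, hflC, hyC]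
    push_cast
    field_simp
    ring
  · have hsaw : saw y = 1/2 - Int.fract y := by rw [saw, if_neg h]
    have hfl : (⌊y⌋₊ : ℝ) = y - Int.fract y := by
      rw [natCast_floor_eq_intCast_floor hy0, ← Int.self_sub_fract]
    have hflC : ((⌊y⌋₊ : ℕ) : ℂ) = (x:ℂ)/(n:ℂ) - ((Int.fract y : ℝ) : ℂ) := by
      have h2 := congrArg Complex.ofReal hfl
      push_cast at h2
      rw [h2, hyC]
    rw [if_neg h, hsaw, hflC]
    push_cast
    field_simp
    ring

end Aux

/-- Decomposition of the error term: `E₂(x,F) = x f₁(x,F) + (1/2) g₁(x,F)` for `x ≥ 1`,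
where `g₁(x,F) = ∑ α(n){x/n}({x/n}-1)`. -/
theorem E2_decomposition {d : ℕ} (a : ℕ → Fin d → ℂ)
    (ha : ∀ p : ℕ, p.Prime → ∀ j : Fin d, ‖a p j‖ ≤ 1)
    (hconv : ∃ l : ℂ, Tendsto (fun N : ℕ => ∑ n ∈ Finset.Icc 1 N, alphaF a n / (n : ℂ))
      atTop (𝓝 l))
    (C : ℂ)
    (hC : C = (1/2 : ℂ) * ∏' p : Nat.Primes, (1 - gammaF a (p : ℕ) / ((p : ℕ) : ℂ) ^ 2))
    (E : ℝ → ℂ)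
    (hE : ∀ x : ℝ, E x =
      ∑ n ∈ Finset.Icc 1 ⌊x⌋₊, (n : ℂ) * ∑ m ∈ n.divisors, alphaF a m / (m : ℂ) -
        C * (x : ℂ) ^ 2)
    (E₂ : ℝ → ℂ)
    (hE₂ : ∀ x : ℝ, (¬ ∃ N : ℕ, 0 < N ∧ x = (N : ℝ)) → E₂ x = E x)
    (hE₂int : ∀ N : ℕ, 0 < N → ∃ Lp Lm : ℂ,
      Tendsto E (nhdsWithin (N : ℝ) (Set.Ioi (N : ℝ))) (𝓝 Lp) ∧
      Tendsto E (nhdsWithin (N : ℝ) (Set.Iio (N : ℝ))) (𝓝 Lm) ∧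
      E₂ (N : ℝ) = (Lm + Lp) / 2)
    (f₁ : ℝ → ℂ)
    (hf₁ : ∀ x : ℝ, Tendsto
      (fun N : ℕ => ∑ n ∈ Finset.Icc 1 N, (alphaF a n / (n : ℂ)) * ((saw (x / n) : ℝ) : ℂ))
      atTop (𝓝 (f₁ x)))
    (g₁ : ℝ → ℂ)
    (hg₁ : ∀ x : ℝ, Tendsto
      (fun N : ℕ => ∑ n ∈ Finset.Icc 1 N,
        alphaF a n * ((Int.fract (x / n) : ℝ) : ℂ) * (((Int.fract (x / n) : ℝ) : ℂ) - 1))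
      atTop (𝓝 (g₁ x))) :
    ∀ x : ℝ, 1 ≤ x → E₂ x = (x : ℂ) * f₁ x + (1/2 : ℂ) * g₁ x := by
  classical
  intro x hx
  have hx0 : (0:ℝ) ≤ x := by linarith
  set K := ⌊x⌋₊ with hKdef
  -- abbreviations
  set f : ℕ → ℂ := fun n => alphaF a n / (n:ℂ)^2 with hfdef
  set SumDiv : ℕ → ℂ := fun J => ∑ n ∈ Finset.Icc 1 J, (n : ℂ) *
      ∑ m ∈ n.divisors, alphaF a m / (m : ℂ) with hSDdef
  set δ : ℕ → ℂ := fun n => if ∃ k : ℤ, x / (n:ℝ) = (k : ℝ) then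
      alphaF a n * (((x / (n:ℝ) : ℝ)) : ℂ) else 0 with hδdef
  set D : ℂ := ∑ n ∈ Finset.Icc 1 K, δ n with hDdef
  -- the finite-sum identity for N ≥ K
  have hTot : ∀ N, K ≤ N →
      ∑ n ∈ Finset.Icc 1 N, alphaF a n *
        ((⌊x / (n:ℝ)⌋₊ : ℂ) * ((⌊x / (n:ℝ)⌋₊ : ℂ) + 1) / 2) = SumDiv K := by
    intro N hN
    have hsub : Finset.Icc 1 K ⊆ Finset.Icc 1 N := Finset.Icc_subset_Icc_right hN
    rw [← Finset.sum_subset hsub ?hvan]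
    · have : ∀ n ∈ Finset.Icc 1 K, alphaF a n *
          ((⌊x / (n:ℝ)⌋₊ : ℂ) * ((⌊x / (n:ℝ)⌋₊ : ℂ) + 1) / 2) =
          alphaF a n * (((K / n : ℕ) : ℂ) * (((K / n : ℕ) : ℂ) + 1) / 2) := by
        intro n _
        rw [Nat.floor_div_natCast x n]
      rw [Finset.sum_congr rfl this, ← swap_sum a K]
    · intro n hn hn'
      rw [Finset.mem_Icc] at hn hn'
      push_neg at hn'
      have hKn : K < n := hn' hn.1
      have hxn : x < n := by
        calc x < K + 1 := Nat.lt_floor_add_one x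
          _ ≤ n := by exact_mod_cast hKn
      have hn0 : (0:ℝ) < n := by linarith
      have : ⌊x / (n:ℝ)⌋₊ = 0 := Nat.floor_eq_zero.mpr ((div_lt_one hn0).mpr hxn)
      rw [this]
      norm_num
  have hDN : ∀ N, K ≤ N → ∑ n ∈ Finset.Icc 1 N, δ n = D := by
    intro N hN
    rw [hDdef]
    refine (Finset.sum_subset (Finset.Icc_subset_Icc_right hN) ?_).symm
    intro n hn hn'
    rw [Finset.mem_Icc] at hn hn'
    push_neg at hn'
    have hKn : K < n := hn' hn.1
    have hxn : x < n := by
      calc x < K + 1 := Nat.lt_floor_add_one x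
        _ ≤ n := by exact_mod_cast hKn
    have hn0 : (0:ℝ) < n := by linarith
    rw [hδdef]
    simp only
    rw [if_neg]
    rintro ⟨k, hk⟩
    have h1 : 0 < x / (n:ℝ) := by positivity
    have h2 : x / (n:ℝ) < 1 := (div_lt_one hn0).mpr hxn
    rw [hk] at h1 h2
    have : 0 < k := by exact_mod_cast h1
    have : k < 1 := by exact_mod_cast h2
    omega
  have hsum_eq : ∀ N, K ≤ N →
      (x : ℂ) * (∑ n ∈ Finset.Icc 1 N, (alphaF a n / (n : ℂ)) * ((saw (x / n) : ℝ) : ℂ))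
      + (1/2 : ℂ) * (∑ n ∈ Finset.Icc 1 N,
          alphaF a n * ((Int.fract (x / n) : ℝ) : ℂ) * (((Int.fract (x / n) : ℝ) : ℂ) - 1))
      = SumDiv K - ((x:ℂ)^2/2) * (∑ n ∈ Finset.Icc 1 N, f n) - (1/2 : ℂ) * D := by
    intro N hN
    have hKN1 : 1 ≤ N ∨ True := Or.inr trivial
    have expand : ∑ n ∈ Finset.Icc 1 N, alphaF a n *
        ((⌊x / (n:ℝ)⌋₊ : ℂ) * ((⌊x / (n:ℝ)⌋₊ : ℂ) + 1) / 2)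
        = (x : ℂ) * (∑ n ∈ Finset.Icc 1 N, (alphaF a n / (n : ℂ)) * ((saw (x / n) : ℝ) : ℂ))
        + (1/2 : ℂ) * (∑ n ∈ Finset.Icc 1 N,
            alphaF a n * ((Int.fract (x / n) : ℝ) : ℂ) * (((Int.fract (x / n) : ℝ) : ℂ) - 1))
        + ((x:ℂ)^2/2) * (∑ n ∈ Finset.Icc 1 N, f n)
        + (1/2 : ℂ) * (∑ n ∈ Finset.Icc 1 N, δ n) := by
      rw [Finset.mul_sum, Finset.mul_sum, Finset.mul_sum, Finset.mul_sum,
        ← Finset.sum_add_distrib, ← Finset.sum_add_distrib, ← Finset.sum_add_distrib]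
      refine Finset.sum_congr rfl (fun n hn => ?_)
      rw [Finset.mem_Icc] at hn
      exact key_identity a x hx n hn.1
    have h1 := hTot N hN
    have h2 := hDN N hN
    rw [expand, h2] at h1
    linear_combination h1
  -- limits
  have hA := hasSum_alphaF a ha
  have hCval : (∏' p : Nat.Primes, (1 - gammaF a (p:ℕ) / ((p:ℕ):ℂ)^2)) = 2 * C := by
    rw [hC]; ring
  rw [hCval] at hA
  have htendA : Tendsto (fun N : ℕ => ∑ n ∈ Finset.Icc 1 N, f n) atTop (𝓝 (2 * C)) := by
    have h0 := hA.tendsto_sum_nat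
    have heq : ∀ N : ℕ, ∑ n ∈ Finset.Icc 1 N, f n = ∑ n ∈ Finset.range (N + 1), f n := by
      intro N
      refine Finset.sum_subset (fun n hn => ?_) (fun n hn hn' => ?_)
      · rw [Finset.mem_Icc] at hn; rw [Finset.mem_range]; omega
      · rw [Finset.mem_range] at hn
        rw [Finset.mem_Icc] at hn'
        push_neg at hn'
        have : n = 0 := by omega
        rw [this, hfdef]
        simp [alphaF_zero]
    have h1 := h0.comp (tendsto_add_atTop_nat 1)
    exact Tendsto.congr (fun N => (heq N).symm) h1
  have hlimRHS : Tendsto (fun N : ℕ => SumDiv K - ((x:ℂ)^2/2) *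
      (∑ n ∈ Finset.Icc 1 N, f n) - (1/2 : ℂ) * D) atTop
      (𝓝 (SumDiv K - (x:ℂ)^2 * C - (1/2 : ℂ) * D)) := by
    have : SumDiv K - (x:ℂ)^2 * C - (1/2 : ℂ) * D
        = SumDiv K - ((x:ℂ)^2/2) * (2 * C) - (1/2 : ℂ) * D := by ring
    rw [this]
    exact ((tendsto_const_nhds.sub (htendA.const_mul _)).sub tendsto_const_nhds)
  have hlimLHS : Tendsto (fun N : ℕ =>
      (x : ℂ) * (∑ n ∈ Finset.Icc 1 N, (alphaF a n / (n : ℂ)) * ((saw (x / n) : ℝ) : ℂ))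
      + (1/2 : ℂ) * (∑ n ∈ Finset.Icc 1 N,
          alphaF a n * ((Int.fract (x / n) : ℝ) : ℂ) * (((Int.fract (x / n) : ℝ) : ℂ) - 1)))
      atTop (𝓝 ((x:ℂ) * f₁ x + (1/2 : ℂ) * g₁ x)) :=
    ((hf₁ x).const_mul _).add ((hg₁ x).const_mul _)
  have main_eq : (x:ℂ) * f₁ x + (1/2 : ℂ) * g₁ x = SumDiv K - (x:ℂ)^2 * C - (1/2 : ℂ) * D := by
    refine tendsto_nhds_unique hlimLHS (hlimRHS.congr' ?_)
    filter_upwards [eventually_ge_atTop K] with N hN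
    exact (hsum_eq N hN).symm
  -- case analysis
  by_cases hint : ∃ N : ℕ, 0 < N ∧ x = (N : ℝ)
  · obtain ⟨M, hM0, hxM⟩ := hint
    subst hxM
    have hKM : K = M := by rw [hKdef, Nat.floor_natCast]
    -- identify D
    have hdiveq : (Finset.Icc 1 M).filter (· ∣ M) = M.divisors := by
      ext n
      simp only [Finset.mem_filter, Finset.mem_Icc, Nat.mem_divisors]
      constructor
      · rintro ⟨⟨h1, h2⟩, h3⟩
        exact ⟨h3, by omega⟩
      · rintro ⟨h1, h2⟩
        exact ⟨⟨Nat.pos_of_dvd_of_pos h1 (by omega), Nat.le_of_dvd (by omega) h1⟩, h1⟩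
    have hterm : D = (M:ℂ) * ∑ m ∈ M.divisors, alphaF a m / (m : ℂ) := by
      rw [hDdef, hKM]
      have hcongr : ∀ n ∈ Finset.Icc 1 M, δ n =
          if n ∣ M then (M:ℂ) * (alphaF a n / (n:ℂ)) else 0 := by
        intro n hn
        rw [Finset.mem_Icc] at hn
        have hn0 : (n:ℝ) ≠ 0 := Nat.cast_ne_zero.mpr (by omega)
        rw [hδdef]
        simp only
        by_cases hdvd : n ∣ M
        · rw [if_pos, if_pos hdvd]
          · push_cast
            field_simp
          · obtain ⟨c, hc⟩ := hdvd
            refine ⟨(c : ℤ), ?_⟩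
            rw [hc]
            push_cast
            rw [mul_comm]
            rw [mul_div_assoc, div_self hn0, mul_one]
        · rw [if_neg, if_neg hdvd]
          rintro ⟨k, hk⟩
          have hkn : ((M:ℝ)) = k * n := by
            field_simp at hk
            linarith [hk]
          have hk0 : 0 < k := by
            have h1 : 0 < (M:ℝ) / (n:ℝ) := by
              have : (0:ℝ) < n := by positivity
              have hM : (0:ℝ) < M := by exact_mod_cast hM0
              positivity
            rw [hk] at h1
            exact_mod_cast h1
          apply hdvd
          have hc : ((k.toNat : ℕ) : ℝ) = (k : ℝ) := by
            rw [← Int.cast_natCast, Int.toNat_of_nonneg hk0.le]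
          have : (M:ℝ) = ((n * k.toNat : ℕ) : ℝ) := by
            push_cast
            rw [hc]
            linarith [hkn]
          have hMeq : M = n * k.toNat := by exact_mod_cast this
          exact Dvd.intro _ hMeq.symm
      rw [Finset.sum_congr rfl hcongr, ← Finset.sum_filter, hdiveq, ← Finset.mul_sum]
    obtain ⟨M', hM'⟩ : ∃ M', M = M' + 1 := ⟨M - 1, by omega⟩
    have hstep : SumDiv M = SumDiv M' + (M:ℂ) * ∑ m ∈ M.divisors, alphaF a m / (m : ℂ) := by
      rw [hSDdef]
      simp only
      rw [hM', Finset.sum_Icc_succ_top (by omega)]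
    obtain ⟨Lp, Lm, hLp, hLm, hE2⟩ := hE₂int M hM0
    have hMC : ((M:ℝ) : ℂ) = (M : ℂ) := by push_cast; ring
    have hM1R : (1:ℝ) ≤ (M:ℝ) := hx
    have hright : Tendsto E (nhdsWithin (M:ℝ) (Set.Ioi (M:ℝ)))
        (𝓝 (SumDiv M - C * (M:ℂ)^2)) := by
      have hmem : Set.Ioo (M:ℝ) ((M:ℝ)+1) ∈ nhdsWithin (M:ℝ) (Set.Ioi (M:ℝ)) :=
        Ioo_mem_nhdsGT_of_mem (Set.mem_Ico.mpr ⟨le_refl _, by linarith⟩)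
      have hcont : Tendsto (fun y : ℝ => SumDiv M - C * ((y:ℝ):ℂ)^2) (𝓝 (M:ℝ))
          (𝓝 (SumDiv M - C * (M:ℂ)^2)) := by
        have : Continuous (fun y : ℝ => SumDiv M - C * ((y:ℝ):ℂ)^2) :=
          continuous_const.sub (continuous_const.mul (Complex.continuous_ofReal.pow 2))
        have h2 := this.tendsto (M:ℝ)
        simpa [hMC] using h2
      refine Tendsto.congr' ?_ (hcont.mono_left nhdsWithin_le_nhds)
      filter_upwards [hmem] with y hy
      rw [hE y]
      have h0y : (0:ℝ) ≤ y := by have := hy.1; linarith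
      have hfl : ⌊y⌋₊ = M := (Nat.floor_eq_iff h0y).mpr ⟨hy.1.le, hy.2⟩
      rw [hfl]
    have hleft : Tendsto E (nhdsWithin (M:ℝ) (Set.Iio (M:ℝ)))
        (𝓝 (SumDiv M' - C * (M:ℂ)^2)) := by
      have hmem : Set.Ioo ((M:ℝ)-1) (M:ℝ) ∈ nhdsWithin (M:ℝ) (Set.Iio (M:ℝ)) :=
        Ioo_mem_nhdsLT_of_mem (Set.mem_Ioc.mpr ⟨by linarith, le_refl _⟩)
      have hcont : Tendsto (fun y : ℝ => SumDiv M' - C * ((y:ℝ):ℂ)^2) (𝓝 (M:ℝ))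
          (𝓝 (SumDiv M' - C * (M:ℂ)^2)) := by
        have : Continuous (fun y : ℝ => SumDiv M' - C * ((y:ℝ):ℂ)^2) :=
          continuous_const.sub (continuous_const.mul (Complex.continuous_ofReal.pow 2))
        have h2 := this.tendsto (M:ℝ)
        simpa [hMC] using h2
      refine Tendsto.congr' ?_ (hcont.mono_left nhdsWithin_le_nhds)
      filter_upwards [hmem] with y hy
      rw [hE y]
      have h0y : (0:ℝ) ≤ y := by have := hy.1; linarith
      have hM'R : ((M':ℕ):ℝ) = (M:ℝ) - 1 := by
        rw [hM']; push_cast; ring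
      have hfl : ⌊y⌋₊ = M' := by
        refine (Nat.floor_eq_iff h0y).mpr ⟨?_, ?_⟩
        · rw [hM'R]; exact hy.1.le
        · rw [hM'R]; linarith [hy.2]
      rw [hfl]
    have hLpEq : Lp = SumDiv M - C * (M:ℂ)^2 := tendsto_nhds_unique hLp hright
    have hLmEq : Lm = SumDiv M' - C * (M:ℂ)^2 := tendsto_nhds_unique hLm hleft
    rw [hE2, hLpEq, hLmEq, main_eq, hKM, hterm]
    rw [hMC]
    linear_combination (-1/2 : ℂ) * hstep
  · have hE2 := hE₂ x hint
    have hD0 : D = 0 := by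
      rw [hDdef]
      refine Finset.sum_eq_zero (fun n hn => ?_)
      rw [Finset.mem_Icc] at hn
      rw [hδdef]
      simp only
      rw [if_neg]
      rintro ⟨k, hk⟩
      have hn0 : (0:ℝ) < n := by exact_mod_cast hn.1
      have hk0 : 0 < k := by
        have h1 : 0 < x / (n:ℝ) := by positivity
        rw [hk] at h1
        exact_mod_cast h1
      apply hint
      refine ⟨n * k.toNat, Nat.mul_pos (by omega) (by omega), ?_⟩
      have hxk : x = k * n := by
        field_simp at hk
        linarith [hk]
      have hc : ((k.toNat : ℕ) : ℝ) = (k : ℝ) := by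
        rw [← Int.cast_natCast, Int.toNat_of_nonneg hk0.le]
      push_cast
      rw [hc]
      linarith [hxk]
    rw [hE2, hE x, main_eq, hD0]
    ring
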